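/- arXiv:1004.2626 — 2 statements merged into one kernel-verified Lean document; each statement's English description precedes it below -/
import Mathlib

section
/- Violation of Rule 2a (value in shared neighborhood of a simultaneous Hall set): Let P ⊆ A be a simultaneous Hall set, i.e., |N(P)| + |N(P^S) ∩ N(P^T)| = |P|. Then no edge (u,v) with u ∉ P and v ∈ N(P^S) ∩ N(P^T) can belong to a simultaneous matching of G. -/
/-!
In a simultaneous matching `M` every vertex of `S ∪ T` has exactly one `M`-edge, and a right
vertex receives at most one `M`-edge from `S` and at most one from `T`. Hence the `M`-edges at `P`
are `|P|` many, end in `N(P)`, and two of them share an endpoint `w` only if one starts in `P^S`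
and the other in `P^T`, i.e. `w ∈ N(P^S) ∩ N(P^T)`. If `(u, v) ∈ M` with `u ∉ P`, then `u` already
uses `v` on its side (`S` or `T`), so `v` receives at most one `M`-edge from `P`, and counting gives
`|P| ≤ |N(P)| + |N(P^S) ∩ N(P^T)| - 1`, contradicting the Hall equality.
-/

open Finset

variable {V W : Type*} [DecidableEq V] [DecidableEq W]

/-- Neighborhood of a set `P` of left vertices in the bipartite graph with edge set `E`. -/
def nbhd (E : Finset (V × W)) (P : Finset V) : Finset W :=
  (E.filter (fun e => e.1 ∈ P)).image Prod.snd

/-- A set of pairwise non-adjacent edges. -/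
def IsMatching (M : Finset (V × W)) : Prop :=
  ∀ e ∈ M, ∀ f ∈ M, e ≠ f → e.1 ≠ f.1 ∧ e.2 ≠ f.2

/-- Every vertex of `S` is incident to an edge of `M`. -/
def Covers (M : Finset (V × W)) (S : Finset V) : Prop :=
  ∀ s ∈ S, ∃ e ∈ M, e.1 = s

/-- `M` is a simultaneous matching: `M ∩ (S × B)` is a matching covering `S` and
`M ∩ (T × B)` is a matching covering `T`. -/
def SimMatching (E M : Finset (V × W)) (S T : Finset V) : Prop :=
  M ⊆ E ∧
  IsMatching (M.filter (fun e => e.1 ∈ S)) ∧ Covers (M.filter (fun e => e.1 ∈ S)) S ∧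
  IsMatching (M.filter (fun e => e.1 ∈ T)) ∧ Covers (M.filter (fun e => e.1 ∈ T)) T

theorem Finset.card_le_card_image_add_card {α β : Type*} [DecidableEq β] {s : Finset α}
    {f : α → β} {Y : Finset β} (h₁ : ∀ b ∉ Y, (s.filter (f · = b)).card ≤ 1)
    (h₂ : ∀ b ∈ Y, (s.filter (f · = b)).card ≤ 2) :
    s.card ≤ (s.image f).card + Y.card :=
  calc s.card = ∑ b ∈ s.image f, (s.filter (f · = b)).card := card_eq_sum_card_image f s
    _ ≤ ∑ b ∈ s.image f, (1 + if b ∈ Y then 1 else 0) := by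
        refine sum_le_sum fun b _ => ?_
        split_ifs with hb
        · exact h₂ b hb
        · exact h₁ b hb
    _ = (s.image f).card + ((s.image f).filter (· ∈ Y)).card := by
        rw [sum_add_distrib, sum_const, smul_eq_mul, mul_one, sum_boole, Nat.cast_id]
    _ ≤ (s.image f).card + Y.card := by
        gcongr
        exact fun b hb => (mem_filter.1 hb).2

theorem mem_nbhd {E : Finset (V × W)} {P : Finset V} {w : W} :
    w ∈ nbhd E P ↔ ∃ e ∈ E, e.1 ∈ P ∧ e.2 = w := by
  simp [nbhd, and_assoc]

namespace SimMatching

variable {E M : Finset (V × W)} {S T : Finset V}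

omit [DecidableEq W] in
theorem symm (hM : SimMatching E M S T) : SimMatching E M T S :=
  let ⟨hME, hMS, hCS, hMT, hCT⟩ := hM
  ⟨hME, hMT, hCT, hMS, hCS⟩

theorem eq_of_fst_mem {e f : V × W} (hM : SimMatching E M S T) (he : e ∈ M) (hf : f ∈ M)
    (heS : e.1 ∈ S) (hfS : f.1 ∈ S) (h : e.1 = f.1 ∨ e.2 = f.2) : e = f := by
  by_contra hne
  have := hM.2.1 e (mem_filter.2 ⟨he, heS⟩) f (mem_filter.2 ⟨hf, hfS⟩) hne
  tauto

theorem eq_of_fst_eq {e f : V × W} (hM : SimMatching E M S T) (he : e ∈ M) (hf : f ∈ M)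
    (heST : e.1 ∈ S ∪ T) (h : e.1 = f.1) : e = f := by
  rcases mem_union.1 heST with heS | heT
  · exact hM.eq_of_fst_mem he hf heS (h ▸ heS) (Or.inl h)
  · exact hM.symm.eq_of_fst_mem he hf heT (h ▸ heT) (Or.inl h)

theorem card_filter_fst_mem {P : Finset V} (hM : SimMatching E M S T) (hP : P ⊆ S ∪ T) :
    (M.filter (·.1 ∈ P)).card = P.card := by
  have hinj : Set.InjOn Prod.fst (M.filter (·.1 ∈ P) : Set (V × W)) := fun e he f hf hef =>
    hM.eq_of_fst_eq (mem_filter.1 he).1 (mem_filter.1 hf).1 (hP (mem_filter.1 he).2) hef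
  rw [← card_image_of_injOn hinj]
  congr 1
  ext p
  simp only [mem_image, mem_filter]
  constructor
  · rintro ⟨e, ⟨-, heP⟩, rfl⟩
    exact heP
  · intro hp
    rcases mem_union.1 (hP hp) with hpS | hpT
    · obtain ⟨e, he, rfl⟩ := hM.2.2.1 p hpS
      exact ⟨e, ⟨(mem_filter.1 he).1, hp⟩, rfl⟩
    · obtain ⟨e, he, rfl⟩ := hM.2.2.2.2 p hpT
      exact ⟨e, ⟨(mem_filter.1 he).1, hp⟩, rfl⟩

section Fiber

variable {F : Finset (V × W)} {w : W}

theorem card_fiber_le_one (hM : SimMatching E M S T) (hF : F ⊆ M) (hw : ∀ e ∈ F, e.2 = w)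
    (hS : ∀ e ∈ F, e.1 ∈ S) : F.card ≤ 1 :=
  card_le_one.2 fun e he f hf =>
    hM.eq_of_fst_mem (hF he) (hF hf) (hS e he) (hS f hf) (Or.inr ((hw e he).trans (hw f hf).symm))

theorem card_fiber_le_two (hM : SimMatching E M S T) (hF : F ⊆ M) (hw : ∀ e ∈ F, e.2 = w)
    (hST : ∀ e ∈ F, e.1 ∈ S ∪ T) : F.card ≤ 2 := by
  have hsplit : F ⊆ F.filter (·.1 ∈ S) ∪ F.filter (·.1 ∈ T) := fun e he => by
    simpa [he] using hST e he
  calc F.card ≤ (F.filter (·.1 ∈ S) ∪ F.filter (·.1 ∈ T)).card := card_le_card hsplit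
    _ ≤ (F.filter (·.1 ∈ S)).card + (F.filter (·.1 ∈ T)).card := card_union_le _ _
    _ ≤ 1 + 1 := by
        gcongr
        · exact hM.card_fiber_le_one ((filter_subset _ _).trans hF)
            (fun e he => hw e (mem_filter.1 he).1) fun e he => (mem_filter.1 he).2
        · exact hM.symm.card_fiber_le_one ((filter_subset _ _).trans hF)
            (fun e he => hw e (mem_filter.1 he).1) fun e he => (mem_filter.1 he).2

end Fiber

variable {P : Finset V} {w : W}

theorem card_fiber_le_one_of_notMem_nbhd (hM : SimMatching E M S T) (hP : P ⊆ S ∪ T)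
    (hw : w ∉ nbhd E (P ∩ (S \ T))) :
    ((M.filter (·.1 ∈ P)).filter (·.2 = w)).card ≤ 1 := by
  refine hM.symm.card_fiber_le_one (fun e he => (mem_filter.1 (mem_filter.1 he).1).1)
    (fun e he => (mem_filter.1 he).2) fun e he => ?_
  simp only [mem_filter] at he
  obtain ⟨⟨heM, heP⟩, rfl⟩ := he
  by_contra heT
  have heS : e.1 ∈ S := (mem_union.1 (hP heP)).resolve_right heT
  exact hw (mem_nbhd.2 ⟨e, hM.1 heM, mem_inter.2 ⟨heP, mem_sdiff.2 ⟨heS, heT⟩⟩, rfl⟩)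

theorem card_fiber_le_one_of_mem {u : V} (hM : SimMatching E M S T) (huw : (u, w) ∈ M)
    (hu : u ∉ P) (huS : u ∈ S) (hP : P ⊆ S ∪ T) :
    ((M.filter (·.1 ∈ P)).filter (·.2 = w)).card ≤ 1 := by
  refine hM.symm.card_fiber_le_one (fun e he => (mem_filter.1 (mem_filter.1 he).1).1)
    (fun e he => (mem_filter.1 he).2) fun e he => ?_
  simp only [mem_filter] at he
  obtain ⟨⟨heM, heP⟩, rfl⟩ := he
  by_contra heT
  have heS : e.1 ∈ S := (mem_union.1 (hP heP)).resolve_right heT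
  have hue : (u, e.2) = e := hM.eq_of_fst_mem huw heM huS heS (Or.inr rfl)
  rw [← hue] at heP
  exact hu heP

end SimMatching

theorem rule2a_sound_general (B : Finset W) (S T : Finset V) (E : Finset (V × W))
    (hE : E ⊆ (S ∪ T) ×ˢ B)
    (P : Finset V) (hP : P ⊆ S ∪ T)
    (hHall : (nbhd E P).card +
      (nbhd E (P ∩ (S \ T)) ∩ nbhd E (P ∩ (T \ S))).card = P.card)
    (u : V) (v : W) (hu : u ∉ P)
    (hv : v ∈ nbhd E (P ∩ (S \ T)) ∩ nbhd E (P ∩ (T \ S))) :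
    ∀ M, SimMatching E M S T → (u, v) ∉ M := by
  intro M hM huv
  set X := nbhd E (P ∩ (S \ T)) ∩ nbhd E (P ∩ (T \ S))
  set MP := M.filter (·.1 ∈ P)
  have hfiber : ∀ w ∉ X.erase v, (MP.filter (·.2 = w)).card ≤ 1 := by
    intro w hw
    rcases eq_or_ne w v with rfl | hwv
    · rcases mem_union.1 (mem_product.1 (hE (hM.1 huv))).1 with huS | huT
      · exact hM.card_fiber_le_one_of_mem huv hu huS hP
      · exact hM.symm.card_fiber_le_one_of_mem huv hu huT (union_comm S T ▸ hP)
    rw [mem_erase, mem_inter, not_and_or, not_and_or] at hw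
    rcases hw with h | h | h
    · exact absurd hwv h
    · exact hM.card_fiber_le_one_of_notMem_nbhd hP h
    · exact hM.symm.card_fiber_le_one_of_notMem_nbhd (union_comm S T ▸ hP) h
  have hcount : P.card ≤ (MP.image Prod.snd).card + (X.erase v).card := by
    rw [← hM.card_filter_fst_mem hP]
    exact card_le_card_image_add_card hfiber fun w _ => hM.card_fiber_le_two
      (filter_subset _ _ |>.trans (filter_subset _ _)) (fun e he => (mem_filter.1 he).2)
      fun e he => hP (mem_filter.1 (mem_filter.1 he).1).2
  have himage : MP.image Prod.snd ⊆ nbhd E P := fun w hw => by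
    obtain ⟨e, he, rfl⟩ := mem_image.1 hw
    exact mem_nbhd.2 ⟨e, hM.1 (mem_filter.1 he).1, (mem_filter.1 he).2, rfl⟩
  have hNP := card_le_card himage
  have hX := card_erase_add_one hv
  omega

/-- Rule 2a: if `P` is a simultaneous Hall set, no edge `(u,v)` with `u ∉ P` and
`v ∈ N(P^S) ∩ N(P^T)` can belong to a simultaneous matching. -/
theorem rule2a_sound (B : Finset W) (S T : Finset V) (E : Finset (V × W))
    (hE : E ⊆ (S ∪ T) ×ˢ B) (hST : (S ∩ T).Nonempty)
    (P : Finset V) (hP : P ⊆ S ∪ T)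
    (hHall : (nbhd E P).card +
      (nbhd E (P ∩ (S \ T)) ∩ nbhd E (P ∩ (T \ S))).card = P.card)
    (u : V) (v : W) (huv : (u, v) ∈ E) (hu : u ∉ P)
    (hv : v ∈ nbhd E (P ∩ (S \ T)) ∩ nbhd E (P ∩ (T \ S))) :
    ∀ M, SimMatching E M S T → (u, v) ∉ M :=
  rule2a_sound_general B S T E hE P hP hHall u v hu hv
end

section
/- Violation of Rule 2d (variable in both sets taking a value of a simultaneous Hall set): Let P ⊆ A be a simultaneous Hall set. Then no edge (u,v) with u ∈ (S ∩ T) \ P and v ∈ N(P) can belong to a simultaneous matching of G. -/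
/-!
Fix a simultaneous matching `M` containing `(u, v)` and let `U_S`, `U_T` be the partners of `P`
in its `S`- and `T`-parts. Each part is a matching covering its side, so
`|U_S| + |U_T| ≥ |P ∩ S| + |P ∩ T| = |P| + |P ∩ S ∩ T|`. A common partner of both parts is either
matched to a vertex of `P ∩ S ∩ T` by a single edge, or matched to a vertex of `P^S` in the
`S`-part and one of `P^T` in the `T`-part; hence `|U_S ∩ U_T| ≤ |P ∩ S ∩ T| + |N(P^S) ∩ N(P^T)|`.
So `|U_S ∪ U_T| ≥ |P| - |N(P^S) ∩ N(P^T)| = |N(P)|`. But `U_S ∪ U_T ⊆ N(P)` misses `v`,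
which is already matched to `u ∉ P` in both parts.
-/

open Finset

variable {V W : Type*} [DecidableEq V] [DecidableEq W]

section

variable {E M : Finset (V × W)} {S T P : Finset V}

theorem mem_nbhd_s9 {b : W} : b ∈ nbhd E P ↔ ∃ a ∈ P, (a, b) ∈ E := by
  simp [nbhd, and_comm]

theorem nbhd_mono (h : M ⊆ E) : nbhd M P ⊆ nbhd E P := fun b hb => by
  obtain ⟨a, ha, hab⟩ := mem_nbhd_s9.1 hb
  exact mem_nbhd_s9.2 ⟨a, ha, h hab⟩

namespace IsMatching

omit [DecidableEq V] [DecidableEq W] in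
theorem mono {M' : Finset (V × W)} (h : IsMatching M) (hM' : M' ⊆ M) : IsMatching M' :=
  fun e he f hf hef => h e (hM' he) f (hM' hf) hef

omit [DecidableEq V] [DecidableEq W] in
theorem injOn_fst (h : IsMatching M) : Set.InjOn Prod.fst (M : Set (V × W)) :=
  fun e he f hf hef => by_contra fun hne => (h e he f hf hne).1 hef

omit [DecidableEq V] [DecidableEq W] in
theorem injOn_snd (h : IsMatching M) : Set.InjOn Prod.snd (M : Set (V × W)) :=
  fun e he f hf hef => by_contra fun hne => (h e he f hf hne).2 hef

theorem card_nbhd (h : IsMatching M) (P : Finset V) :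
    (nbhd M P).card = (M.filter (fun e => e.1 ∈ P)).card :=
  card_image_of_injOn ((h.mono (filter_subset _ _)).injOn_snd)

theorem card_nbhd_le (h : IsMatching M) (P : Finset V) : (nbhd M P).card ≤ P.card := by
  rw [h.card_nbhd, ← card_image_of_injOn ((h.mono (filter_subset _ _)).injOn_fst)]
  refine card_le_card fun a ha => ?_
  obtain ⟨e, he, rfl⟩ := mem_image.1 ha
  exact (mem_filter.1 he).2

theorem card_inter_le_card_nbhd (h : IsMatching M) (hM : Covers M S) (P : Finset V) :
    (P ∩ S).card ≤ (nbhd M P).card := by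
  rw [h.card_nbhd]
  refine le_trans (card_le_card fun a ha => ?_) (card_image_le (f := Prod.fst))
  obtain ⟨haP, haS⟩ := mem_inter.1 ha
  obtain ⟨e, he, rfl⟩ := hM a haS
  exact mem_image.2 ⟨e, mem_filter.2 ⟨he, haP⟩, rfl⟩

theorem nbhd_subset_erase (h : IsMatching M) (hME : M ⊆ E) {u : V} {v : W} (huv : (u, v) ∈ M)
    (hu : u ∉ P) : nbhd M P ⊆ (nbhd E P).erase v := fun b hb => by
  refine mem_erase.2 ⟨?_, nbhd_mono hME hb⟩
  rintro rfl
  obtain ⟨a, ha, hab⟩ := mem_nbhd_s9.1 hb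
  obtain rfl : a = u := congrArg Prod.fst (h.injOn_snd hab huv rfl)
  exact hu ha

end IsMatching

theorem nbhd_inter_nbhd_subset (hME : M ⊆ E) (hS : IsMatching (M.filter (fun e => e.1 ∈ S)))
    (hT : IsMatching (M.filter (fun e => e.1 ∈ T))) :
    nbhd (M.filter (fun e => e.1 ∈ S)) P ∩ nbhd (M.filter (fun e => e.1 ∈ T)) P ⊆
      nbhd (M.filter (fun e => e.1 ∈ S)) (P ∩ (S ∩ T)) ∪
        (nbhd E (P ∩ (S \ T)) ∩ nbhd E (P ∩ (T \ S))) := by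
  intro b hb
  obtain ⟨hbS, hbT⟩ := mem_inter.1 hb
  obtain ⟨a, haP, habS⟩ := mem_nbhd_s9.1 hbS
  obtain ⟨c, hcP, hcbT⟩ := mem_nbhd_s9.1 hbT
  obtain ⟨habM, haS⟩ := mem_filter.1 habS
  obtain ⟨hcbM, hcT⟩ := mem_filter.1 hcbT
  by_cases hac : a = c
  · subst hac
    exact mem_union_left _ (mem_nbhd_s9.2 ⟨a, mem_inter.2 ⟨haP, mem_inter.2 ⟨haS, hcT⟩⟩, habS⟩)
  have hne : (a, b) ≠ (c, b) := fun h => hac (Prod.ext_iff.1 h).1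
  have hcS : c ∉ S := fun hcS => (hS _ habS _ (mem_filter.2 ⟨hcbM, hcS⟩) hne).2 rfl
  have haT : a ∉ T := fun haT => (hT _ (mem_filter.2 ⟨habM, haT⟩) _ hcbT hne).2 rfl
  refine mem_union_right _ (mem_inter.2 ⟨mem_nbhd_s9.2 ⟨a, ?_, hME habM⟩, mem_nbhd_s9.2 ⟨c, ?_, hME hcbM⟩⟩)
  · exact mem_inter.2 ⟨haP, mem_sdiff.2 ⟨haS, haT⟩⟩
  · exact mem_inter.2 ⟨hcP, mem_sdiff.2 ⟨hcT, hcS⟩⟩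

theorem card_nbhd_inter_nbhd_le (hME : M ⊆ E) (hS : IsMatching (M.filter (fun e => e.1 ∈ S)))
    (hT : IsMatching (M.filter (fun e => e.1 ∈ T))) :
    (nbhd (M.filter (fun e => e.1 ∈ S)) P ∩ nbhd (M.filter (fun e => e.1 ∈ T)) P).card ≤
      (P ∩ (S ∩ T)).card + (nbhd E (P ∩ (S \ T)) ∩ nbhd E (P ∩ (T \ S))).card :=
  calc _ ≤ _ := card_le_card (nbhd_inter_nbhd_subset hME hS hT)
    _ ≤ _ := card_union_le _ _
    _ ≤ _ := by grw [hS.card_nbhd_le]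

theorem card_inter_add_card_inter_of_subset_union (hP : P ⊆ S ∪ T) :
    (P ∩ S).card + (P ∩ T).card = P.card + (P ∩ (S ∩ T)).card := by
  rw [← card_union_add_card_inter, ← inter_union_distrib_left, inter_eq_left.2 hP,
    ← inter_inter_distrib_left]

end

theorem rule2d_sound_general (S T : Finset V) (E : Finset (V × W))
    (P : Finset V) (hP : P ⊆ S ∪ T)
    (hHall : (nbhd E P).card +
      (nbhd E (P ∩ (S \ T)) ∩ nbhd E (P ∩ (T \ S))).card = P.card)
    (u : V) (v : W)
    (hu : u ∈ (S ∩ T) \ P) (hv : v ∈ nbhd E P) :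
    ∀ M, SimMatching E M S T → (u, v) ∉ M := by
  rintro M ⟨hME, hMS, hCS, hMT, hCT⟩ huvM
  obtain ⟨⟨huS, huT⟩, huP⟩ := by simpa only [mem_sdiff, mem_inter] using hu
  set MS := M.filter (fun e => e.1 ∈ S)
  set MT := M.filter (fun e => e.1 ∈ T)
  have hUS : nbhd MS P ⊆ (nbhd E P).erase v :=
    hMS.nbhd_subset_erase ((filter_subset _ _).trans hME) (mem_filter.2 ⟨huvM, huS⟩) huP
  have hUT : nbhd MT P ⊆ (nbhd E P).erase v :=
    hMT.nbhd_subset_erase ((filter_subset _ _).trans hME) (mem_filter.2 ⟨huvM, huT⟩) huP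
  have hcover : (nbhd MS P ∪ nbhd MT P).card ≤ (nbhd E P).card - 1 := by
    rw [← card_erase_of_mem hv]
    exact card_le_card (union_subset hUS hUT)
  have hcardS : (P ∩ S).card ≤ (nbhd MS P).card := hMS.card_inter_le_card_nbhd hCS P
  have hcardT : (P ∩ T).card ≤ (nbhd MT P).card := hMT.card_inter_le_card_nbhd hCT P
  have hcommon : (nbhd MS P ∩ nbhd MT P).card ≤ (P ∩ (S ∩ T)).card +
      (nbhd E (P ∩ (S \ T)) ∩ nbhd E (P ∩ (T \ S))).card := card_nbhd_inter_nbhd_le hME hMS hMT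
  have := card_union_add_card_inter (nbhd MS P) (nbhd MT P)
  have := card_inter_add_card_inter_of_subset_union hP
  have := card_pos.2 ⟨v, hv⟩
  omega

/-- Rule 2d: if `P` is a simultaneous Hall set, no edge `(u,v)` with
`u ∈ (S ∩ T) \ P` and `v ∈ N(P)` can belong to a simultaneous matching. -/
theorem rule2d_sound (B : Finset W) (S T : Finset V) (E : Finset (V × W))
    (hE : E ⊆ (S ∪ T) ×ˢ B) (hST : (S ∩ T).Nonempty)
    (P : Finset V) (hP : P ⊆ S ∪ T)
    (hHall : (nbhd E P).card +
      (nbhd E (P ∩ (S \ T)) ∩ nbhd E (P ∩ (T \ S))).card = P.card)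
    (u : V) (v : W) (huv : (u, v) ∈ E)
    (hu : u ∈ (S ∩ T) \ P) (hv : v ∈ nbhd E P) :
    ∀ M, SimMatching E M S T → (u, v) ∉ M :=
  rule2d_sound_general S T E P hP hHall u v hu hv
end
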